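/- arXiv:2303.09078 — 5 statements merged into one kernel-verified Lean document; each statement's English description precedes it below -/
import Mathlib

section
/- For every t < 0 and every θ ∈ ℝ, the Angenent oval parametrization satisfies the implicit paperclip equation: cos(x(θ,t)) = e^t · cosh(y(θ,t)). -/
/-!
With `s = √(cos² θ + a²)`, the arctangent gives `cos x = s / √(a² + 1)` at once. The choice of
`a(t)` is exactly what makes `a / √(a² + 1) = eᵗ`, so the shift `-t` in `y` cancels and
`y = log ((s - cos θ) / a)`. Since `(s - cos θ)(s + cos θ) = a²`, the reciprocal of
`(s - cos θ) / a` is `(s + cos θ) / a`, whence `cosh y = s / a` and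
`eᵗ cosh y = s / √(a² + 1) = cos x`.
-/

open Real

/-- `a(t) := (e^{-2t} - 1)^{-1/2}` for the Angenent oval. -/
noncomputable def angenentA (t : ℝ) : ℝ := Real.sqrt ((Real.exp (-2 * t) - 1)⁻¹)

/-- The `x`-coordinate of the Angenent oval in the turning angle parametrization. -/
noncomputable def angenentX (θ t : ℝ) : ℝ :=
  Real.arctan (Real.sin θ / Real.sqrt (Real.cos θ ^ 2 + angenentA t ^ 2))

/-- The `y`-coordinate of the Angenent oval in the turning angle parametrization. -/
noncomputable def angenentY (θ t : ℝ) : ℝ :=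
  -t + Real.log ((Real.sqrt (Real.cos θ ^ 2 + angenentA t ^ 2) - Real.cos θ) /
    Real.sqrt (angenentA t ^ 2 + 1))

theorem lt_sqrt_sq_add_sq (c : ℝ) {a : ℝ} (ha : a ≠ 0) : c < √(c ^ 2 + a ^ 2) :=
  (le_abs_self c).trans_lt (by
    rw [← sqrt_sq_eq_abs]
    exact sqrt_lt_sqrt (sq_nonneg c) (lt_add_of_pos_right _ (by positivity)))

theorem cos_arctan_sin_div_sqrt_cos_sq_add_sq (θ : ℝ) {a : ℝ} (ha : a ≠ 0) :
    cos (arctan (sin θ / √(cos θ ^ 2 + a ^ 2))) = √(cos θ ^ 2 + a ^ 2) / √(a ^ 2 + 1) := by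
  have hs : 0 < √(cos θ ^ 2 + a ^ 2) := sqrt_pos.mpr (by positivity)
  have hs2 : √(cos θ ^ 2 + a ^ 2) ^ 2 = cos θ ^ 2 + a ^ 2 := sq_sqrt (by positivity)
  have h : 1 + (sin θ / √(cos θ ^ 2 + a ^ 2)) ^ 2 = (a ^ 2 + 1) / √(cos θ ^ 2 + a ^ 2) ^ 2 := by
    field_simp
    linear_combination hs2 + sin_sq_add_cos_sq θ
  rw [cos_arctan, h, sqrt_div' _ (sq_nonneg _), sqrt_sq hs.le, one_div_div]

theorem cosh_log_sqrt_sq_add_sq_sub_div (c : ℝ) {a : ℝ} (ha : 0 < a) :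
    cosh (log ((√(c ^ 2 + a ^ 2) - c) / a)) = √(c ^ 2 + a ^ 2) / a := by
  have hs2 : √(c ^ 2 + a ^ 2) ^ 2 = c ^ 2 + a ^ 2 := sq_sqrt (by positivity)
  have hsc : 0 < √(c ^ 2 + a ^ 2) - c := sub_pos.mpr (lt_sqrt_sq_add_sq c ha.ne')
  rw [cosh_eq, exp_neg, exp_log (div_pos hsc ha)]
  field_simp
  linear_combination -hs2

theorem sq_exp_lt_one {t : ℝ} (ht : t < 0) : exp t ^ 2 < 1 :=
  pow_lt_one₀ (exp_nonneg t) (exp_lt_one_iff.mpr ht) two_ne_zero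

theorem angenentA_pos {t : ℝ} (ht : t < 0) : 0 < angenentA t :=
  sqrt_pos.mpr (inv_pos.mpr (sub_pos.mpr (one_lt_exp_iff.mpr (by linarith))))

theorem sq_angenentA {t : ℝ} (ht : t < 0) : angenentA t ^ 2 = exp t ^ 2 / (1 - exp t ^ 2) := by
  have hE : exp (-2 * t) = (exp t ^ 2)⁻¹ := by rw [← exp_nat_mul, ← exp_neg]; ring_nf
  have hE2 : 0 < 1 - exp t ^ 2 := sub_pos.mpr (sq_exp_lt_one ht)
  have hd : 0 < exp (-2 * t) - 1 := sub_pos.mpr (one_lt_exp_iff.mpr (by linarith))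
  rw [angenentA, sq_sqrt (inv_pos.mpr hd).le, hE]
  field_simp [hE2.ne']

theorem angenentA_div_sqrt_sq_add_one {t : ℝ} (ht : t < 0) :
    angenentA t / √(angenentA t ^ 2 + 1) = exp t := by
  have hE2 : 0 < 1 - exp t ^ 2 := sub_pos.mpr (sq_exp_lt_one ht)
  calc angenentA t / √(angenentA t ^ 2 + 1)
      = √(angenentA t ^ 2 / (angenentA t ^ 2 + 1)) := by
        rw [sqrt_div' _ (by positivity), sqrt_sq (angenentA_pos ht).le]
    _ = √(exp t ^ 2) := by
        rw [sq_angenentA ht]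
        field_simp [hE2.ne']
        rw [add_sub_cancel, div_one]
    _ = exp t := sqrt_sq (exp_nonneg t)

theorem angenentY_eq_log {t : ℝ} (ht : t < 0) (θ : ℝ) :
    angenentY θ t = log ((√(cos θ ^ 2 + angenentA t ^ 2) - cos θ) / angenentA t) := by
  have hA := angenentA_pos ht
  have hsc : 0 < √(cos θ ^ 2 + angenentA t ^ 2) - cos θ :=
    sub_pos.mpr (lt_sqrt_sq_add_sq _ hA.ne')
  rw [angenentY, ← div_div_div_cancel_right₀ hA.ne', div_div_eq_mul_div, mul_div_assoc,
    angenentA_div_sqrt_sq_add_one ht, log_mul (div_pos hsc hA).ne' (exp_pos t).ne', log_exp]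
  ring

theorem cos_angenentX {t : ℝ} (ht : t < 0) (θ : ℝ) :
    cos (angenentX θ t) = √(cos θ ^ 2 + angenentA t ^ 2) / √(angenentA t ^ 2 + 1) :=
  cos_arctan_sin_div_sqrt_cos_sq_add_sq θ (angenentA_pos ht).ne'

/-- For every `t < 0` and every `θ`, the Angenent oval parametrization satisfies the
implicit paperclip equation `cos (x(θ,t)) = e^t · cosh (y(θ,t))`. -/
theorem angenent_paperclip_equation (t θ : ℝ) (ht : t < 0) :
    Real.cos (angenentX θ t) = Real.exp t * Real.cosh (angenentY θ t) := by
  rw [cos_angenentX ht, angenentY_eq_log ht, cosh_log_sqrt_sq_add_sq_sub_div _ (angenentA_pos ht),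
    ← angenentA_div_sqrt_sq_add_one ht]
  field_simp [(angenentA_pos ht).ne']
end

section
/- For every t < 0 and θ ∈ ℝ, the Angenent oval parametrization is a turning-angle parametrization: ∂_θ x(θ,t) = cos θ / √(cos²θ + a(t)²) and ∂_θ y(θ,t) = sin θ / √(cos²θ + a(t)²); in particular the unit tangent vector of the curve θ ↦ (x(θ,t), y(θ,t)) is (cos θ, sin θ). -/
open Real

theorem lt_sqrt_sq_add (x : ℝ) {A : ℝ} (hA : 0 < A) : x < √(x ^ 2 + A) := by
  rcases lt_or_ge x 0 with hx | hx
  · exact hx.trans_le (sqrt_nonneg _)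
  · exact (lt_sqrt hx).mpr (by linarith)

section TurningAngle

variable {A : ℝ} (hA : 0 < A) (θ : ℝ)
include hA

theorem hasDerivAt_sqrt_cos_sq_add :
    HasDerivAt (fun s => √(cos s ^ 2 + A)) (-(cos θ * sin θ) / √(cos θ ^ 2 + A)) θ := by
  have hpos : 0 < cos θ ^ 2 + A := by positivity
  have h : HasDerivAt (fun s => cos s ^ 2 + A) (2 * cos θ * -sin θ) θ := by
    simpa using ((hasDerivAt_cos θ).pow 2).add_const A
  refine (h.sqrt hpos.ne').congr_deriv ?_
  have : 0 < √(cos θ ^ 2 + A) := sqrt_pos.mpr hpos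
  field_simp

theorem hasDerivAt_arctan_sin_div_sqrt_cos_sq_add :
    HasDerivAt (fun s => arctan (sin s / √(cos s ^ 2 + A)))
      (cos θ / √(cos θ ^ 2 + A)) θ := by
  have hpos : 0 < cos θ ^ 2 + A := by positivity
  have hF : 0 < √(cos θ ^ 2 + A) := sqrt_pos.mpr hpos
  have hq : HasDerivAt (fun s => sin s / √(cos s ^ 2 + A)) _ θ :=
    (hasDerivAt_sin θ).div (hasDerivAt_sqrt_cos_sq_add hA θ) hF.ne'
  refine hq.arctan.congr_deriv ?_
  field_simp
  ring

theorem hasDerivAt_log_sqrt_cos_sq_add_sub_cos (b : ℝ) {C : ℝ} (hC : C ≠ 0) :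
    HasDerivAt (fun s => b + log ((√(cos s ^ 2 + A) - cos s) / C))
      (sin θ / √(cos θ ^ 2 + A)) θ := by
  have hF : 0 < √(cos θ ^ 2 + A) := sqrt_pos.mpr (by positivity)
  have hFc : √(cos θ ^ 2 + A) - cos θ ≠ 0 := (sub_pos.mpr (lt_sqrt_sq_add _ hA)).ne'
  have hg : HasDerivAt (fun s => (√(cos s ^ 2 + A) - cos s) / C) _ θ :=
    ((hasDerivAt_sqrt_cos_sq_add hA θ).sub (hasDerivAt_cos θ)).div_const C
  refine ((hg.log (div_ne_zero hFc hC)).const_add b).congr_deriv ?_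
  field_simp
  ring

end TurningAngle

theorem inv_sqrt_smul_cos_sin_div {F : ℝ} (hF : 0 < F) (θ : ℝ) :
    (√((cos θ / F) ^ 2 + (sin θ / F) ^ 2))⁻¹ • ((cos θ / F, sin θ / F) : ℝ × ℝ) =
      (cos θ, sin θ) := by
  have hnorm : (cos θ / F) ^ 2 + (sin θ / F) ^ 2 = F⁻¹ ^ 2 := by
    field_simp
    linarith [sin_sq_add_cos_sq θ]
  rw [hnorm, sqrt_sq (inv_nonneg.mpr hF.le), inv_inv, Prod.smul_mk, smul_eq_mul, smul_eq_mul]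
  ext <;> field_simp

/-- The Angenent oval parametrization is a turning-angle parametrization:
`∂_θ x = cos θ / √(cos²θ + a²)` and `∂_θ y = sin θ / √(cos²θ + a²)`; in particular the unit
tangent vector (the derivative vector divided by its Euclidean length) is `(cos θ, sin θ)`. -/
theorem angenent_turning_angle (t θ : ℝ) (ht : t < 0) :
    HasDerivAt (fun s => angenentX s t)
      (Real.cos θ / Real.sqrt (Real.cos θ ^ 2 + angenentA t ^ 2)) θ ∧
    HasDerivAt (fun s => angenentY s t)
      (Real.sin θ / Real.sqrt (Real.cos θ ^ 2 + angenentA t ^ 2)) θ ∧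
    (Real.sqrt ((Real.cos θ / Real.sqrt (Real.cos θ ^ 2 + angenentA t ^ 2)) ^ 2 +
        (Real.sin θ / Real.sqrt (Real.cos θ ^ 2 + angenentA t ^ 2)) ^ 2))⁻¹ •
      ((Real.cos θ / Real.sqrt (Real.cos θ ^ 2 + angenentA t ^ 2),
        Real.sin θ / Real.sqrt (Real.cos θ ^ 2 + angenentA t ^ 2)) : ℝ × ℝ) =
      ((Real.cos θ, Real.sin θ) : ℝ × ℝ) := by
  have hA : 0 < angenentA t ^ 2 := pow_pos (angenentA_pos ht) 2
  have hC : √(angenentA t ^ 2 + 1) ≠ 0 := (sqrt_pos.mpr (by positivity)).ne'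
  exact ⟨hasDerivAt_arctan_sin_div_sqrt_cos_sq_add hA θ,
    hasDerivAt_log_sqrt_cos_sq_add_sub_cos hA θ (-t) hC,
    inv_sqrt_smul_cos_sin_div (sqrt_pos.mpr (by positivity)) θ⟩
end

section
/- The Angenent oval evolves by curve shortening flow in the level-set sense: let F(x,y,t) := cos x − e^t cosh y. Then at every (x,y,t) with t < 0 and F(x,y,t) = 0 one has ∂_t F · ((∂_x F)² + (∂_y F)²) = (∂_y F)² ∂²_x F − 2 (∂_x F)(∂_y F) ∂_x∂_y F + (∂_x F)² ∂²_y F. (Note that (∂_x F, ∂_y F) ≠ (0,0) at every point of the zero level set when t < 0.) -/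
open Real

/-- The level-set function of the paperclip: `F(x,y,t) := cos x − e^t cosh y`. -/
noncomputable def paperclipF (x y t : ℝ) : ℝ := Real.cos x - Real.exp t * Real.cosh y

/-! On the zero level set `cos x = e^t cosh y`, so `F_t = -cos x` and `F_yy = -cos x` as well,
while `F_xx = -cos x` and `F_xy = 0`; both sides of the flow equation become
`-cos x · (F_x² + F_y²)`. The gradient `(-sin x, -e^t sinh y)` can only vanish at `y = 0`,
where `cos x = e^t ∈ (0, 1)` forces `sin x ≠ 0`. -/

theorem deriv_paperclipF_x (y t : ℝ) :
    deriv (fun x' => paperclipF x' y t) = fun x => -sin x := by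
  funext x
  exact ((hasDerivAt_cos x).sub_const _).deriv

theorem deriv_paperclipF_y (x t : ℝ) :
    deriv (fun y' => paperclipF x y' t) = fun y => -(exp t * sinh y) := by
  funext y
  exact (((hasDerivAt_cosh y).const_mul (exp t)).const_sub _).deriv

theorem deriv_paperclipF_t (x y t : ℝ) :
    deriv (fun t' => paperclipF x y t') t = -(exp t * cosh y) :=
  (((hasDerivAt_exp t).mul_const (cosh y)).const_sub _).deriv

theorem deriv_deriv_paperclipF_x (x y t : ℝ) :
    deriv (deriv (fun x' => paperclipF x' y t)) x = -cos x := by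
  rw [deriv_paperclipF_x]
  exact (hasDerivAt_sin x).neg.deriv

theorem deriv_deriv_paperclipF_y (x y t : ℝ) :
    deriv (deriv (fun y' => paperclipF x y' t)) y = -(exp t * cosh y) := by
  rw [deriv_paperclipF_y]
  exact ((hasDerivAt_sinh y).const_mul (exp t)).neg.deriv

theorem deriv_deriv_paperclipF_xy (x y t : ℝ) :
    deriv (fun y' => deriv (fun x' => paperclipF x' y' t) x) y = 0 := by
  simp only [deriv_paperclipF_x, deriv_const]

theorem cos_eq_of_paperclipF_eq_zero {x y t : ℝ} (hF : paperclipF x y t = 0) :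
    cos x = exp t * cosh y := by
  rwa [paperclipF, sub_eq_zero] at hF

theorem sin_ne_zero_of_paperclipF_eq_zero {x t : ℝ} (ht : t < 0) (hF : paperclipF x 0 t = 0) :
    sin x ≠ 0 := by
  intro hsin
  have hcos : cos x = exp t := by simpa using cos_eq_of_paperclipF_eq_zero hF
  have hlt : exp t < 1 := exp_lt_one_iff.mpr ht
  nlinarith [sin_sq_add_cos_sq x, exp_pos t]

/-- The Angenent oval evolves by curve shortening flow in the level-set sense: at every point
of the zero level set of `F(x,y,t) = cos x − e^t cosh y` with `t < 0`, the spatial gradient is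
nonzero and `∂_t F · (F_x² + F_y²) = F_y² F_xx − 2 F_x F_y F_xy + F_x² F_yy`. -/
theorem angenent_level_set_flow (x y t : ℝ) (ht : t < 0) (hF : paperclipF x y t = 0) :
    ((deriv (fun x' => paperclipF x' y t) x, deriv (fun y' => paperclipF x y' t) y) : ℝ × ℝ)
        ≠ (0, 0) ∧
    deriv (fun t' => paperclipF x y t') t *
        ((deriv (fun x' => paperclipF x' y t) x) ^ 2 +
          (deriv (fun y' => paperclipF x y' t) y) ^ 2) =
      (deriv (fun y' => paperclipF x y' t) y) ^ 2 *
          deriv (deriv (fun x' => paperclipF x' y t)) x -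
        2 * deriv (fun x' => paperclipF x' y t) x * deriv (fun y' => paperclipF x y' t) y *
          deriv (fun y' => deriv (fun x' => paperclipF x' y' t) x) y +
        (deriv (fun x' => paperclipF x' y t) x) ^ 2 *
          deriv (deriv (fun y' => paperclipF x y' t)) y := by
  rw [deriv_deriv_paperclipF_x, deriv_deriv_paperclipF_y, deriv_deriv_paperclipF_xy,
    deriv_paperclipF_t, deriv_paperclipF_x, deriv_paperclipF_y]
  refine ⟨?_, by rw [cos_eq_of_paperclipF_eq_zero hF]; ring⟩
  intro hgrad
  obtain ⟨hsin, hsinh⟩ := Prod.mk.inj hgrad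
  have hy : y = 0 := by
    simpa [(exp_pos t).ne'] using hsinh
  subst hy
  exact sin_ne_zero_of_paperclipF_eq_zero ht hF (neg_eq_zero.mp hsin)
end

section
/- The class of admissible speeds is closed under composition: if ζ₁,…,ζ_k : Γ₊ⁿ → ℝ are admissible speeds on the positive cone Γ₊ⁿ ⊂ ℝⁿ and φ : Γ₊ᵏ → ℝ is an admissible speed on Γ₊ᵏ ⊂ ℝᵏ, then the function z ↦ φ(ζ₁(z),…,ζ_k(z)) is an admissible speed on Γ₊ⁿ. (Each ζ_i is positive on Γ₊ⁿ, so the composition is well defined.) -/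
/-- The open positive cone `Γ₊ ⊂ ℝᵐ`. -/
def PosCone (m : ℕ) : Set (Fin m → ℝ) := {z | ∀ i, 0 < z i}

/-- A smooth function on the open positive cone is an admissible speed if it is symmetric,
elliptic (all first partials positive), positively 1-homogeneous, and inverse-concave
(`z ↦ φ(z₁⁻¹,…,z_m⁻¹)⁻¹` is concave on the cone). -/
def IsAdmissibleSpeed {m : ℕ} (φ : (Fin m → ℝ) → ℝ) : Prop :=
  ContDiffOn ℝ (⊤ : ℕ∞) φ (PosCone m) ∧
  (∀ σ : Equiv.Perm (Fin m), ∀ z ∈ PosCone m, φ (z ∘ σ) = φ z) ∧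
  (∀ z ∈ PosCone m, ∀ i, 0 < fderiv ℝ φ z (Pi.single i 1)) ∧
  (∀ z ∈ PosCone m, ∀ c : ℝ, 0 < c → φ (c • z) = c * φ z) ∧
  ConcaveOn ℝ (PosCone m) (fun z => (φ fun i => (z i)⁻¹)⁻¹)



lemma posCone_isOpen (m : ℕ) : IsOpen (PosCone m) := by
  have : PosCone m = ⋂ i, (fun z : Fin m → ℝ => z i) ⁻¹' Set.Ioi 0 := by
    ext z; simp [PosCone]
  rw [this]
  exact isOpen_iInter_of_finite fun i => (isOpen_Ioi).preimage (continuous_apply i)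

lemma posCone_convex (m : ℕ) : Convex ℝ (PosCone m) := by
  intro x hx y hy a b ha hb hab
  intro i
  rcases ha.lt_or_eq with h | h
  · have : 0 ≤ b * y i := mul_nonneg hb (hy i).le
    have := mul_pos h (hx i)
    simp only [Pi.add_apply, Pi.smul_apply, smul_eq_mul]
    linarith
  · have hb1 : b = 1 := by linarith
    simp only [Pi.add_apply, Pi.smul_apply, smul_eq_mul, ← h, hb1]
    simpa using hy i

lemma fderiv_apply_eq_sum {m : ℕ} (φ : (Fin m → ℝ) → ℝ) (z v : Fin m → ℝ) :
    fderiv ℝ φ z v = ∑ i, v i * fderiv ℝ φ z (Pi.single i 1) := by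
  have hv : v = ∑ i, (v i) • (Pi.single i (1:ℝ) : Fin m → ℝ) := by
    funext j
    simp [Finset.sum_apply, Pi.single_apply]
  conv_lhs => rw [hv]
  rw [map_sum]
  simp [smul_eq_mul]

lemma fderiv_apply_nonneg {m : ℕ} {φ : (Fin m → ℝ) → ℝ} {z v : Fin m → ℝ}
    (he : ∀ i, 0 < fderiv ℝ φ z (Pi.single i 1)) (hv : ∀ i, 0 ≤ v i) :
    0 ≤ fderiv ℝ φ z v := by
  rw [fderiv_apply_eq_sum]
  exact Finset.sum_nonneg fun i _ => mul_nonneg (hv i) (he i).le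

lemma fderiv_apply_pos {m : ℕ} (hm : 0 < m) {φ : (Fin m → ℝ) → ℝ} {z v : Fin m → ℝ}
    (he : ∀ i, 0 < fderiv ℝ φ z (Pi.single i 1)) (hv : ∀ i, 0 < v i) :
    0 < fderiv ℝ φ z v := by
  rw [fderiv_apply_eq_sum]
  exact Finset.sum_pos (fun i _ => mul_pos (hv i) (he i))
    (Finset.univ_nonempty_iff.2 (Fin.pos_iff_nonempty.mp hm))

lemma cone_smul_mem {m : ℕ} {c : ℝ} {z : Fin m → ℝ} (hc : 0 < c) (hz : z ∈ PosCone m) :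
    c • z ∈ PosCone m := fun i => mul_pos hc (hz i)

lemma speed_euler {m : ℕ} {φ : (Fin m → ℝ) → ℝ}
    (hs : ContDiffOn ℝ (⊤ : ℕ∞) φ (PosCone m))
    (hhom : ∀ z ∈ PosCone m, ∀ c : ℝ, 0 < c → φ (c • z) = c * φ z)
    {z : Fin m → ℝ} (hz : z ∈ PosCone m) :
    fderiv ℝ φ z z = φ z := by
  have hdiff : DifferentiableAt ℝ φ z :=
    (hs.differentiableOn (by simp)).differentiableAt ((posCone_isOpen m).mem_nhds hz)
  have h1 : HasDerivAt (fun t : ℝ => t • z) z 1 := by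
    simpa using (hasDerivAt_id (1:ℝ)).smul_const z
  have h2 : HasDerivAt (fun t : ℝ => φ (t • z)) (fderiv ℝ φ z z) 1 := by
    have hd' : HasFDerivAt φ (fderiv ℝ φ z) ((1:ℝ) • z) := by
      simpa using hdiff.hasFDerivAt
    exact hd'.comp_hasDerivAt 1 h1
  have hev : (fun t : ℝ => φ (t • z)) =ᶠ[nhds (1:ℝ)] fun t => t * φ z := by
    filter_upwards [eventually_gt_nhds (show (0:ℝ) < 1 by norm_num)] with t ht
    exact hhom z hz t ht
  have h3 : HasDerivAt (fun t : ℝ => t * φ z) (fderiv ℝ φ z z) 1 :=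
    h2.congr_of_eventuallyEq hev.symm
  have h4 : HasDerivAt (fun t : ℝ => t * φ z) (φ z) 1 := by
    simpa using (hasDerivAt_id (1:ℝ)).mul_const (φ z)
  exact h3.unique h4

lemma speed_pos {m : ℕ} (hm : 0 < m) {φ : (Fin m → ℝ) → ℝ}
    (hs : ContDiffOn ℝ (⊤ : ℕ∞) φ (PosCone m))
    (he : ∀ z ∈ PosCone m, ∀ i, 0 < fderiv ℝ φ z (Pi.single i 1))
    (hhom : ∀ z ∈ PosCone m, ∀ c : ℝ, 0 < c → φ (c • z) = c * φ z)
    {z : Fin m → ℝ} (hz : z ∈ PosCone m) : 0 < φ z := by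
  rw [← speed_euler hs hhom hz]
  exact fderiv_apply_pos hm (he z hz) hz

lemma speed_mono {m : ℕ} {φ : (Fin m → ℝ) → ℝ}
    (hs : ContDiffOn ℝ (⊤ : ℕ∞) φ (PosCone m))
    (he : ∀ z ∈ PosCone m, ∀ i, 0 < fderiv ℝ φ z (Pi.single i 1))
    {u v : Fin m → ℝ} (hu : u ∈ PosCone m) (hv : v ∈ PosCone m) (hle : v ≤ u) :
    φ v ≤ φ u := by
  set γ : ℝ → (Fin m → ℝ) := fun t => v + t • (u - v) with hγ
  have hmem : ∀ t : ℝ, 0 ≤ t → γ t ∈ PosCone m := by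
    intro t ht i
    have h1 : 0 ≤ t * (u i - v i) := mul_nonneg ht (by have := hle i; linarith)
    have := hv i
    simp only [hγ, Pi.add_apply, Pi.smul_apply, Pi.sub_apply, smul_eq_mul]
    linarith
  have hder : ∀ t : ℝ, 0 ≤ t →
      HasDerivAt (fun s => φ (γ s)) (fderiv ℝ φ (γ t) (u - v)) t := by
    intro t ht
    have hdiff : DifferentiableAt ℝ φ (γ t) :=
      (hs.differentiableOn (by simp)).differentiableAt
        ((posCone_isOpen m).mem_nhds (hmem t ht))
    have h1 : HasDerivAt γ (u - v) t := by
      simpa [hγ] using ((hasDerivAt_id t).smul_const (u - v)).const_add v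
    exact hdiff.hasFDerivAt.comp_hasDerivAt t h1
  have hmono : MonotoneOn (fun s => φ (γ s)) (Set.Icc 0 1) := by
    apply monotoneOn_of_deriv_nonneg (convex_Icc 0 1)
    · intro t ht
      exact (hder t ht.1).continuousAt.continuousWithinAt
    · intro t ht
      rw [interior_Icc] at ht
      exact (hder t ht.1.le).differentiableAt.differentiableWithinAt
    · intro t ht
      rw [interior_Icc] at ht
      rw [(hder t ht.1.le).deriv]
      exact fderiv_apply_nonneg (he (γ t) (hmem t ht.1.le))
        (fun i => by have := hle i; simp; linarith)
  have h01 := hmono (Set.mem_Icc.2 ⟨le_refl 0, by norm_num⟩)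
    (Set.mem_Icc.2 ⟨by norm_num, le_refl 1⟩) (by norm_num)
  simpa [hγ] using h01

/-- The class of admissible speeds is closed under composition: if `ζ₁,…,ζ_k` are admissible
speeds on `Γ₊ⁿ` and `φ` is an admissible speed on `Γ₊ᵏ`, then `z ↦ φ(ζ₁(z),…,ζ_k(z))` is an
admissible speed on `Γ₊ⁿ`. -/
theorem admissibleSpeed_comp {n k : ℕ} (hn : 0 < n) (hk : 0 < k)
    (ζ : Fin k → ((Fin n → ℝ) → ℝ)) (φ : (Fin k → ℝ) → ℝ)
    (hζ : ∀ j, IsAdmissibleSpeed (ζ j)) (hφ : IsAdmissibleSpeed φ) :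
    IsAdmissibleSpeed (fun z => φ fun j => ζ j z) := by
  obtain ⟨φs, φsym, φell, φhom, φconc⟩ := hφ
  have ζs : ∀ j, ContDiffOn ℝ (⊤ : ℕ∞) (ζ j) (PosCone n) := fun j => (hζ j).1
  have ζsym := fun j => (hζ j).2.1
  have ζell := fun j => (hζ j).2.2.1
  have ζhom := fun j => (hζ j).2.2.2.1
  have ζconc := fun j => (hζ j).2.2.2.2
  have ζpos : ∀ j, ∀ z ∈ PosCone n, 0 < ζ j z := fun j z hz =>
    speed_pos hn (ζs j) (ζell j) (ζhom j) hz
  have hmap : ∀ z ∈ PosCone n, (fun j => ζ j z) ∈ PosCone k := fun z hz j => ζpos j z hz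
  have hinv : ∀ {m : ℕ}, ∀ z ∈ PosCone m, (fun i => (z i)⁻¹) ∈ PosCone m :=
    fun z hz i => inv_pos.2 (hz i)
  refine ⟨?_, ?_, ?_, ?_, ?_⟩
  · exact φs.comp (contDiffOn_pi.2 fun j => ζs j) hmap
  · intro σ z hz
    simp only
    congr 1
    funext j
    exact ζsym j σ z hz
  · intro z hz i
    have hGd : HasFDerivAt (fun z (j : Fin k) => ζ j z)
        (ContinuousLinearMap.pi fun j => fderiv ℝ (ζ j) z) z :=
      hasFDerivAt_pi.2 fun j =>
        (((ζs j).differentiableOn (by simp)).differentiableAt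
          ((posCone_isOpen n).mem_nhds hz)).hasFDerivAt
    have hφd : HasFDerivAt φ (fderiv ℝ φ (fun j => ζ j z)) (fun j => ζ j z) :=
      ((φs.differentiableOn (by simp)).differentiableAt
        ((posCone_isOpen k).mem_nhds (hmap z hz))).hasFDerivAt
    have hcomp : HasFDerivAt (fun z => φ fun j => ζ j z)
        ((fderiv ℝ φ fun j => ζ j z).comp
          (ContinuousLinearMap.pi fun j => fderiv ℝ (ζ j) z)) z := hφd.comp z hGd
    rw [hcomp.fderiv]
    simp only [ContinuousLinearMap.coe_comp', Function.comp_apply,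
      ContinuousLinearMap.pi_apply]
    exact fderiv_apply_pos hk (φell _ (hmap z hz)) (fun j => ζell j z hz i)
  · intro z hz c hc
    simp only
    have h1 : (fun j => ζ j (c • z)) = c • fun j => ζ j z :=
      funext fun j => ζhom j z hz c hc
    rw [h1, φhom _ (hmap z hz) c hc]
  · refine ⟨posCone_convex n, ?_⟩
    intro x hx y hy a b ha hb hab
    simp only [smul_eq_mul]
    set z := a • x + b • y with hzdef
    have hzc : z ∈ PosCone n := posCone_convex n hx hy ha hb hab
    set ψ : Fin k → (Fin n → ℝ) → ℝ := fun j w => (ζ j (fun i => (w i)⁻¹))⁻¹ with hψ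
    have ψpos : ∀ j, ∀ w ∈ PosCone n, 0 < ψ j w :=
      fun j w hw => inv_pos.2 (ζpos j _ (hinv w hw))
    set u : Fin k → ℝ := fun j => a * ψ j x + b * ψ j y with hu
    set w : Fin k → ℝ := fun j => ψ j z with hw
    have hcc : ∀ j, u j ≤ w j := by
      intro j
      have := (ζconc j).2 hx hy ha hb hab
      simpa [hu, hw, hψ, hzdef, smul_eq_mul] using this
    have hupos : u ∈ PosCone k := by
      intro j
      rcases ha.lt_or_eq with h | h
      · exact add_pos_of_pos_of_nonneg (mul_pos h (ψpos j x hx))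
          (mul_nonneg hb (ψpos j y hy).le)
      · have hb1 : b = 1 := by linarith
        simp only [hu, ← h, hb1, zero_mul, zero_add, one_mul]
        exact ψpos j y hy
    have hwpos : w ∈ PosCone k := fun j => ψpos j z hzc
    -- monotone step
    have hinvle : (fun j => (w j)⁻¹) ≤ fun j => (u j)⁻¹ := by
      intro j
      exact inv_anti₀ (hupos j) (hcc j)
    have hmono : φ (fun j => (w j)⁻¹) ≤ φ (fun j => (u j)⁻¹) :=
      speed_mono φs φell (hinv u hupos) (hinv w hwpos) hinvle
    have hφu : 0 < φ (fun j => (u j)⁻¹) := speed_pos hk φs φell φhom (hinv u hupos)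
    have hφw : 0 < φ (fun j => (w j)⁻¹) := speed_pos hk φs φell φhom (hinv w hwpos)
    -- concavity step
    have hconc := φconc.2 (fun j => ψpos j x hx) (fun j => ψpos j y hy) ha hb hab
    have e1 : (fun j => ((fun j' => ψ j' x) j)⁻¹) = fun j => ζ j (fun i => (x i)⁻¹) := by
      funext j; simp [hψ]
    have e2 : (fun j => ((fun j' => ψ j' y) j)⁻¹) = fun j => ζ j (fun i => (y i)⁻¹) := by
      funext j; simp [hψ]
    have e3 : (a • fun j => ψ j x) + (b • fun j => ψ j y) = u := by
      funext j; simp [hu, smul_eq_mul]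
    rw [e3] at hconc
    simp only [e1, e2, smul_eq_mul] at hconc
    have ewz : (fun j => ((w j))⁻¹)  = fun j => ζ j (fun i => (z i)⁻¹) := by
      funext j; simp [hw, hψ]
    calc a * (φ fun j => ζ j fun i => (x i)⁻¹)⁻¹ + b * (φ fun j => ζ j fun i => (y i)⁻¹)⁻¹
        ≤ (φ fun j => (u j)⁻¹)⁻¹ := hconc
      _ ≤ (φ fun j => (w j)⁻¹)⁻¹ := by
          exact inv_anti₀ hφw hmono
      _ = (φ fun j => ζ j fun i => (z i)⁻¹)⁻¹ := by rw [ewz]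
end

section
/- The hypersurface of revolution obtained by rotating the Angenent oval about the x-axis satisfies κ ≥ λ, where κ is the profile curvature and λ the rotational curvature; explicitly, for every t < 0 and every θ ∈ (π/2, 3π/2), y(θ,t) · √(cos²θ + a(t)²) ≥ −cos θ. -/
open Real

/-! With `s = -cos θ / a(t) ≥ 0` the height of the oval is `y = arsinh s` and its curvature is
`κ = a(t) √(1 + s²)`, so `κ y ≥ -cos θ = a(t) s` reduces to `s ≤ √(1 + s²) arsinh s`.
Substituting `s = sinh w` with `w ≥ 0`, this is `sinh w ≤ w cosh w`, i.e. `tanh w ≤ w`. -/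

namespace Real

theorem monotone_mul_cosh_sub_sinh : Monotone fun w : ℝ => w * cosh w - sinh w := by
  have hderiv (w : ℝ) : HasDerivAt (fun w : ℝ => w * cosh w - sinh w) (w * sinh w) w :=
    ((hasDerivAt_id' w).mul (hasDerivAt_cosh w)).sub (hasDerivAt_sinh w) |>.congr_deriv (by ring)
  refine monotone_of_deriv_nonneg (fun w => (hderiv w).differentiableAt) fun w => ?_
  rw [(hderiv w).deriv]
  rcases le_total 0 w with hw | hw
  · exact mul_nonneg hw (sinh_nonneg_iff.mpr hw)
  · exact mul_nonneg_of_nonpos_of_nonpos hw (sinh_nonpos_iff.mpr hw)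

theorem sinh_le_mul_cosh {w : ℝ} (hw : 0 ≤ w) : sinh w ≤ w * cosh w := by
  simpa using monotone_mul_cosh_sub_sinh hw

theorem le_sqrt_one_add_sq_mul_arsinh {s : ℝ} (hs : 0 ≤ s) : s ≤ √(1 + s ^ 2) * arsinh s := by
  simpa only [sinh_arsinh, cosh_arsinh, mul_comm] using sinh_le_mul_cosh (arsinh_nonneg_iff.mpr hs)

theorem sqrt_sq_add_sq_eq_mul_sqrt_one_add_div_sq (x : ℝ) {a : ℝ} (ha : 0 < a) :
    √(x ^ 2 + a ^ 2) = a * √(1 + (x / a) ^ 2) := by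
  have : x ^ 2 + a ^ 2 = a ^ 2 * (1 + (x / a) ^ 2) := by
    field_simp
    ring
  rw [this, sqrt_mul (sq_nonneg _), sqrt_sq ha.le]

end Real

theorem sqrt_angenentA_sq_add_one {t : ℝ} (ht : t < 0) :
    √(angenentA t ^ 2 + 1) = exp (-t) * angenentA t := by
  have hE : 0 < exp (-2 * t) - 1 := by linarith [one_lt_exp_iff.mpr (by linarith : 0 < -2 * t)]
  have hsq : angenentA t ^ 2 = (exp (-2 * t) - 1)⁻¹ := sq_sqrt (inv_pos.mpr hE).le
  have hexp : exp (-t) ^ 2 = exp (-2 * t) := by rw [← exp_nat_mul]; ring_nf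
  rw [← sqrt_sq (mul_pos (exp_pos _) (angenentA_pos ht)).le, mul_pow, hsq, hexp]
  congr 1
  generalize exp (-2 * t) = E at hE ⊢
  field_simp [hE.ne']
  ring

theorem sqrt_cos_sq_add_angenentA_sq {t : ℝ} (ht : t < 0) (θ : ℝ) :
    √(cos θ ^ 2 + angenentA t ^ 2) = angenentA t * √(1 + (-cos θ / angenentA t) ^ 2) := by
  rw [← sqrt_sq_add_sq_eq_mul_sqrt_one_add_div_sq _ (angenentA_pos ht), neg_sq]

theorem angenentY_eq_arsinh {t : ℝ} (ht : t < 0) (θ : ℝ) :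
    angenentY θ t = arsinh (-cos θ / angenentA t) := by
  have hratio : (√(cos θ ^ 2 + angenentA t ^ 2) - cos θ) / (exp (-t) * angenentA t) =
      exp (t + arsinh (-cos θ / angenentA t)) := by
    have := (angenentA_pos ht).ne'
    rw [exp_add, exp_arsinh, sqrt_cos_sq_add_angenentA_sq ht, exp_neg]
    field_simp
    ring
  rw [angenentY, sqrt_angenentA_sq_add_one ht, hratio, log_exp]
  ring

/-- The hypersurface of revolution obtained by rotating the Angenent oval about the `x`-axis
satisfies `κ ≥ λ`: for every `t < 0` and `θ ∈ (π/2, 3π/2)`,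
`y(θ,t) · √(cos²θ + a(t)²) ≥ −cos θ`, i.e. the profile curvature `κ = √(cos²θ + a(t)²)`
dominates the rotational curvature `λ = −cos θ / y(θ,t)`. -/
theorem angenent_revolution_kappa_ge_lambda (t θ : ℝ) (ht : t < 0)
    (hθ : θ ∈ Set.Ioo (π / 2) (3 * π / 2)) :
    -Real.cos θ ≤ angenentY θ t * Real.sqrt (Real.cos θ ^ 2 + angenentA t ^ 2) := by
  have hcos : cos θ ≤ 0 := cos_nonpos_of_pi_div_two_le_of_le hθ.1.le (by linarith [hθ.2])
  have ha := angenentA_pos ht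
  rw [angenentY_eq_arsinh ht, sqrt_cos_sq_add_angenentA_sq ht]
  set s := -cos θ / angenentA t with hs_def
  have hs : 0 ≤ s := div_nonneg (neg_nonneg.mpr hcos) ha.le
  calc -cos θ = angenentA t * s := by rw [hs_def]; field_simp
    _ ≤ angenentA t * (√(1 + s ^ 2) * arsinh s) :=
      mul_le_mul_of_nonneg_left (le_sqrt_one_add_sq_mul_arsinh hs) ha.le
    _ = arsinh s * (angenentA t * √(1 + s ^ 2)) := by ring
end
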